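/- Every totally mixed Nash equilibrium of a finite extensive-form game with perfect information is subgame perfect: the strategy profile it induces on the subgame rooted at any node is a Nash equilibrium of that subgame. -/

import Mathlib

/-- A finite extensive-form game tree: leaves carry payoff vectors, chance
nodes carry edge weights, player nodes carry the acting player's label. -/
inductive GameTree (N : ℕ) : Type
  | leaf (payoff : Fin N → ℝ)
  | chance (n : ℕ) (wt : Fin n → ℝ) (children : Fin n → GameTree N)
  | node (player : Fin N) (n : ℕ) (children : Fin n → GameTree N)

namespace GameTree

variable {N : ℕ}

/-- A behavioral strategy profile: at each node address, a probability for
each child index. -/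
abbrev Profile := List ℕ → ℕ → ℝ

/-- Chance weights are positive and sum to 1; all branching is nonempty. -/
def ValidWeights : GameTree N → Prop
  | leaf _ => True
  | chance n wt cs => 0 < n ∧ (∀ k, 0 < wt k) ∧ (∑ k, wt k) = 1 ∧ ∀ k, (cs k).ValidWeights
  | node _ n cs => 0 < n ∧ ∀ k, (cs k).ValidWeights

/-- The subtree at a given address (list of child indices), if any. -/
def nodeAt : GameTree N → List ℕ → Option (GameTree N)
  | t, [] => some t
  | leaf _, _ :: _ => none
  | chance n _ cs, k :: r => if h : k < n then (cs ⟨k, h⟩).nodeAt r else none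
  | node _ n cs, k :: r => if h : k < n then (cs ⟨k, h⟩).nodeAt r else none

/-- The player acting at a given address, if any. -/
def actor (t : GameTree N) (p : List ℕ) : Option (Fin N) :=
  match t.nodeAt p with
  | some (node i _ _) => some i
  | _ => none

/-- Probability, under profile `σ`, of the path descending from the current
subtree along the given child indices; `p` is the address of the current
subtree in the whole tree. -/
noncomputable def pathProb (σ : Profile) : GameTree N → List ℕ → List ℕ → ℝ
  | _, _, [] => 1
  | leaf _, _, _ :: _ => 0
  | chance n wt cs, p, k :: r =>
      if h : k < n then wt ⟨k, h⟩ * pathProb σ (cs ⟨k, h⟩) (p ++ [k]) r else 0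
  | node _ n cs, p, k :: r =>
      if h : k < n then σ p k * pathProb σ (cs ⟨k, h⟩) (p ++ [k]) r else 0

/-- The list of addresses of all leaves of the tree. -/
def leaves : GameTree N → List (List ℕ)
  | leaf _ => [[]]
  | chance n _ cs => (List.finRange n).flatMap fun k => ((cs k).leaves).map (k.val :: ·)
  | node _ n cs => (List.finRange n).flatMap fun k => ((cs k).leaves).map (k.val :: ·)

/-- Payoff to player `i` at the leaf with the given address (0 if invalid). -/
noncomputable def payoffAt : GameTree N → List ℕ → Fin N → ℝ
  | leaf u, [], i => u i
  | chance n _ cs, k :: r, i => if h : k < n then (cs ⟨k, h⟩).payoffAt r i else 0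
  | node _ n cs, k :: r, i => if h : k < n then (cs ⟨k, h⟩).payoffAt r i else 0
  | _, _, _ => 0

/-- Expected utility of player `i` under profile `σ`:
`u_i(σ) = Σ_λ u_i(λ) Pr[λ|σ]`. -/
noncomputable def util (σ : Profile) (t : GameTree N) (i : Fin N) : ℝ :=
  (t.leaves.map fun l => t.payoffAt l i * pathProb σ t [] l).sum

/-- The profile induced on the subgame rooted at address `ν`. -/
def induced (σ : Profile) (ν : List ℕ) : Profile := fun p => σ (ν ++ p)

/-- The behavioral profile corresponding to a pure strategy profile. -/
def pureProfile (s : List ℕ → ℕ) : Profile := fun p k => if s p = k then 1 else 0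

/-- A pure strategy profile selects an actual outgoing edge at each player node. -/
def ValidPure (t : GameTree N) (s : List ℕ → ℕ) : Prop :=
  ∀ p i m cs, t.nodeAt p = some (node i m cs) → s p < m

/-- A behavioral profile is a genuine probability assignment at each player node. -/
def ValidProfile (t : GameTree N) (σ : Profile) : Prop :=
  ∀ p i m cs, t.nodeAt p = some (node i m cs) →
    (∀ k < m, 0 ≤ σ p k) ∧ (∑ k ∈ Finset.range m, σ p k) = 1

/-- A totally mixed behavioral profile: every edge at every player node gets
strictly positive probability. -/
def TotallyMixed (t : GameTree N) (σ : Profile) : Prop :=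
  ∀ p i m cs, t.nodeAt p = some (node i m cs) →
    (∀ k < m, 0 < σ p k) ∧ (∑ k ∈ Finset.range m, σ p k) = 1

/-- The profile where player `j` deviates from `σ` to the pure strategy `s`. -/
def dev (t : GameTree N) (σ : Profile) (j : Fin N) (s : List ℕ → ℕ) : Profile :=
  fun p k => if t.actor p = some j then pureProfile s p k else σ p k

/-- Nash equilibrium: no player can improve by a unilateral pure deviation. -/
def IsNash (t : GameTree N) (σ : Profile) : Prop :=
  ∀ j : Fin N, ∀ s : List ℕ → ℕ, ValidPure t s → util (dev t σ j s) t j ≤ util σ t j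

/-- Subgame perfection: the induced profile is a Nash equilibrium of every subgame. -/
def IsSubgamePerfect (t : GameTree N) (σ : Profile) : Prop :=
  ∀ ν t', t.nodeAt ν = some t' → IsNash t' (induced σ ν)

/-- Every player is indifferent among all of their pure strategies. -/
def Indifferent (t : GameTree N) (σ : Profile) : Prop :=
  ∀ j : Fin N, ∀ s₁ s₂ : List ℕ → ℕ, ValidPure t s₁ → ValidPure t s₂ →
    util (dev t σ j s₁) t j = util (dev t σ j s₂) t j

/-- Player `j` is indifferent among all of `j`'s pure strategies. -/
def IndifferentFor (t : GameTree N) (σ : Profile) (j : Fin N) : Prop :=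
  ∀ s₁ s₂ : List ℕ → ℕ, ValidPure t s₁ → ValidPure t s₂ →
    util (dev t σ j s₁) t j = util (dev t σ j s₂) t j

end GameTree

/-!
At a totally mixed equilibrium every child of the root is reached with positive probability,
so a profitable deviation in the subgame of a child `k`, completed by pure strategies that do at
least as well as `σ` in the other children, is profitable in the whole game. At chance nodes and
at nodes of other players this is because child `k` carries positive weight; at a node of the
deviating player, because the equilibrium condition bounds the value of every child by the value
of the node, which is their average with positive weights, so all children have that value.
Induction along the address of the subgame finishes the proof.
-/

theorem Finset.sum_mul_lt_sum_mul_of_lt {ι : Type*} [Fintype ι] {w a b : ι → ℝ}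
    (hw : ∀ k, 0 < w k) (hab : ∀ k, a k ≤ b k) {k : ι} (hk : a k < b k) :
    ∑ k, w k * a k < ∑ k, w k * b k :=
  Finset.sum_lt_sum (fun k _ => mul_le_mul_of_nonneg_left (hab k) (hw k).le)
    ⟨k, Finset.mem_univ k, mul_lt_mul_of_pos_left hk (hw k)⟩

theorem Finset.eq_of_sum_mul_eq {ι : Type*} [Fintype ι] {w v : ι → ℝ} {V : ℝ}
    (hw : ∀ k, 0 < w k) (hsum : ∑ k, w k = 1) (hle : ∀ k, v k ≤ V)
    (hV : ∑ k, w k * v k = V) (k : ι) : v k = V := by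
  have hmul : ∑ k, w k * v k = ∑ k, w k * V := by rw [← Finset.sum_mul, hsum, one_mul, hV]
  rw [Finset.sum_eq_sum_iff_of_le fun k _ => mul_le_mul_of_nonneg_left (hle k) (hw k).le] at hmul
  exact mul_left_cancel₀ (hw k).ne' (hmul k (Finset.mem_univ k))

namespace GameTree

variable {N : ℕ}

theorem nodeAt_append (t : GameTree N) (p q : List ℕ) :
    t.nodeAt (p ++ q) = (t.nodeAt p).bind (·.nodeAt q) := by
  induction p generalizing t with
  | nil => simp [nodeAt]
  | cons k r ih =>
    cases t with
    | leaf u => rfl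
    | chance n wt cs => simp only [List.cons_append, nodeAt]; split <;> simp [ih]
    | node i n cs => simp only [List.cons_append, nodeAt]; split <;> simp [ih]

theorem nodeAt_append_of_eq_some {t t' : GameTree N} {p : List ℕ} (h : t.nodeAt p = some t')
    (q : List ℕ) : t.nodeAt (p ++ q) = t'.nodeAt q := by
  rw [nodeAt_append, h, Option.bind_some]

theorem ValidWeights.nodeAt {t t' : GameTree N} (hw : t.ValidWeights) {p : List ℕ}
    (h : t.nodeAt p = some t') : t'.ValidWeights := by
  induction p generalizing t with
  | nil => simp only [GameTree.nodeAt, Option.some.injEq] at h; exact h ▸ hw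
  | cons k r ih =>
    cases t with
    | leaf u => cases h
    | chance n wt cs =>
      simp only [GameTree.nodeAt] at h
      split at h
      · exact ih (hw.2.2.2 _) h
      · cases h
    | node i n cs =>
      simp only [GameTree.nodeAt] at h
      split at h
      · exact ih (hw.2 _) h
      · cases h

theorem ValidProfile.induced {t t' : GameTree N} {σ : Profile} (hσ : ValidProfile t σ)
    {ν : List ℕ} (hν : t.nodeAt ν = some t') : ValidProfile t' (induced σ ν) :=
  fun p i m cs hp => hσ (ν ++ p) i m cs (by rw [nodeAt_append_of_eq_some hν]; exact hp)

theorem TotallyMixed.induced {t t' : GameTree N} {σ : Profile} (hσ : TotallyMixed t σ)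
    {ν : List ℕ} (hν : t.nodeAt ν = some t') : TotallyMixed t' (induced σ ν) :=
  fun p i m cs hp => hσ (ν ++ p) i m cs (by rw [nodeAt_append_of_eq_some hν]; exact hp)

theorem TotallyMixed.validProfile {t : GameTree N} {σ : Profile} (hσ : TotallyMixed t σ) :
    ValidProfile t σ :=
  fun p i m cs hp => ⟨fun k hk => ((hσ p i m cs hp).1 k hk).le, (hσ p i m cs hp).2⟩

theorem actor_append {t t' : GameTree N} {ν : List ℕ} (hν : t.nodeAt ν = some t')
    (q : List ℕ) : t.actor (ν ++ q) = t'.actor q := by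
  rw [actor, actor, nodeAt_append_of_eq_some hν]

theorem induced_dev {t t' : GameTree N} {ν : List ℕ} (hν : t.nodeAt ν = some t')
    (σ : Profile) (j : Fin N) (s : List ℕ → ℕ) :
    induced (dev t σ j s) ν = dev t' (induced σ ν) j (fun q => s (ν ++ q)) := by
  funext q k
  simp only [induced, dev, actor_append hν, pureProfile]

theorem pathProb_append (σ : Profile) (ν : List ℕ) (t : GameTree N) (p l : List ℕ) :
    pathProb σ t (ν ++ p) l = pathProb (induced σ ν) t p l := by
  induction l generalizing t p with
  | nil => simp only [pathProb]
  | cons k r ih =>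
    cases t with
    | leaf u => simp only [pathProb]
    | chance n wt cs =>
      simp only [pathProb]
      split
      · rw [List.append_assoc, ih]
      · rfl
    | node i n cs =>
      simp only [pathProb]
      split
      · rw [List.append_assoc, ih]; rfl
      · rfl

theorem util_leaf (σ : Profile) (u : Fin N → ℝ) (i : Fin N) : util σ (leaf u) i = u i := by
  simp [util, leaves, payoffAt, pathProb]

theorem util_chance (σ : Profile) {n : ℕ} (wt : Fin n → ℝ) (cs : Fin n → GameTree N)
    (i : Fin N) : util σ (chance n wt cs) i = ∑ k, wt k * util (induced σ [k.val]) (cs k) i := by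
  rw [Fin.sum_univ_def, util, leaves, List.map_flatMap, List.flatMap_def, List.sum_flatten,
    List.map_map]
  refine congrArg List.sum (List.map_congr_left fun k _ => ?_)
  simp only [Function.comp_apply, List.map_map, util, ← List.sum_map_mul_left]
  refine congrArg List.sum (List.map_congr_left fun l _ => ?_)
  rw [← pathProb_append, List.append_nil]
  simp only [Function.comp_apply, payoffAt, pathProb, k.isLt, dif_pos, Fin.eta, List.nil_append]
  ring

theorem util_node (σ : Profile) (i₀ : Fin N) {n : ℕ} (cs : Fin n → GameTree N) (i : Fin N) :
    util σ (node i₀ n cs) i = ∑ k : Fin n, σ [] k.val * util (induced σ [k.val]) (cs k) i := by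
  rw [Fin.sum_univ_def, util, leaves, List.map_flatMap, List.flatMap_def, List.sum_flatten,
    List.map_map]
  refine congrArg List.sum (List.map_congr_left fun k _ => ?_)
  simp only [Function.comp_apply, List.map_map, util, ← List.sum_map_mul_left]
  refine congrArg List.sum (List.map_congr_left fun l _ => ?_)
  rw [← pathProb_append, List.append_nil]
  simp only [Function.comp_apply, payoffAt, pathProb, k.isLt, dif_pos, Fin.eta, List.nil_append]
  ring

theorem nodeAt_chance_singleton {n : ℕ} (wt : Fin n → ℝ) (cs : Fin n → GameTree N)
    (k : Fin n) : (chance n wt cs).nodeAt [k.val] = some (cs k) := by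
  simp [nodeAt]

theorem nodeAt_node_singleton (i : Fin N) {n : ℕ} (cs : Fin n → GameTree N) (k : Fin n) :
    (node i n cs).nodeAt [k.val] = some (cs k) := by
  simp [nodeAt]

theorem ValidProfile.root {i : Fin N} {n : ℕ} {cs : Fin n → GameTree N} {σ : Profile}
    (hσ : ValidProfile (node i n cs) σ) : (∀ k : Fin n, 0 ≤ σ [] k) ∧ ∑ k : Fin n, σ [] k = 1 :=
  ⟨fun k => (hσ [] i n cs rfl).1 k k.isLt, by rw [← Finset.sum_range]; exact (hσ [] i n cs rfl).2⟩

theorem TotallyMixed.root {i : Fin N} {n : ℕ} {cs : Fin n → GameTree N} {σ : Profile}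
    (hσ : TotallyMixed (node i n cs) σ) : (∀ k : Fin n, 0 < σ [] k) ∧ ∑ k : Fin n, σ [] k = 1 :=
  ⟨fun k => (hσ [] i n cs rfl).1 k k.isLt, by rw [← Finset.sum_range]; exact (hσ [] i n cs rfl).2⟩

theorem dev_node_nil_of_ne {i j : Fin N} {n : ℕ} (cs : Fin n → GameTree N) (σ : Profile)
    (s : List ℕ → ℕ) (h : i ≠ j) : dev (node i n cs) σ j s [] = σ [] := by
  funext k
  simp [dev, actor, nodeAt, h]

theorem dev_node_nil_self {j : Fin N} {n : ℕ} (cs : Fin n → GameTree N) (σ : Profile)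
    (s : List ℕ → ℕ) : dev (node j n cs) σ j s [] = pureProfile s [] := by
  funext k
  simp [dev, actor, nodeAt]

def joinStrategy {n : ℕ} (a : ℕ) (s : Fin n → List ℕ → ℕ) : List ℕ → ℕ
  | [] => a
  | k :: q => if h : k < n then s ⟨k, h⟩ q else 0

theorem joinStrategy_nil {n : ℕ} (a : ℕ) (s : Fin n → List ℕ → ℕ) : joinStrategy a s [] = a :=
  rfl

theorem joinStrategy_cons {n : ℕ} (a : ℕ) (s : Fin n → List ℕ → ℕ) (k : Fin n) :
    (fun q => joinStrategy a s (k.val :: q)) = s k := by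
  simp [joinStrategy]

theorem validPure_chance_joinStrategy {n : ℕ} {wt : Fin n → ℝ} {cs : Fin n → GameTree N}
    (a : ℕ) {s : Fin n → List ℕ → ℕ} (hs : ∀ k, ValidPure (cs k) (s k)) :
    ValidPure (chance n wt cs) (joinStrategy a s) := by
  rintro (_ | ⟨k, q⟩) i m cs' h
  · cases h
  · simp only [nodeAt] at h
    split at h
    · rename_i hk
      simpa [joinStrategy, hk] using hs ⟨k, hk⟩ q i m cs' h
    · cases h

theorem validPure_node_joinStrategy {i : Fin N} {n : ℕ} {cs : Fin n → GameTree N}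
    {a : ℕ} (ha : a < n) {s : Fin n → List ℕ → ℕ} (hs : ∀ k, ValidPure (cs k) (s k)) :
    ValidPure (node i n cs) (joinStrategy a s) := by
  rintro (_ | ⟨k, q⟩) i' m cs' h
  · cases h
    exact ha
  · simp only [nodeAt] at h
    split at h
    · rename_i hk
      simpa [joinStrategy, hk] using hs ⟨k, hk⟩ q i' m cs' h
    · cases h

theorem util_dev_joinStrategy_chance {n : ℕ} (wt : Fin n → ℝ) (cs : Fin n → GameTree N)
    (σ : Profile) (j : Fin N) (a : ℕ) (s : Fin n → List ℕ → ℕ) :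
    util (dev (chance n wt cs) σ j (joinStrategy a s)) (chance n wt cs) j =
      ∑ k, wt k * util (dev (cs k) (induced σ [k.val]) j (s k)) (cs k) j := by
  simp only [util_chance, induced_dev (nodeAt_chance_singleton wt cs _), List.singleton_append,
    joinStrategy_cons]

theorem util_dev_joinStrategy_node_of_ne {i j : Fin N} (h : i ≠ j) {n : ℕ}
    (cs : Fin n → GameTree N) (σ : Profile) (a : ℕ) (s : Fin n → List ℕ → ℕ) :
    util (dev (node i n cs) σ j (joinStrategy a s)) (node i n cs) j =
      ∑ k : Fin n, σ [] k.val * util (dev (cs k) (induced σ [k.val]) j (s k)) (cs k) j := by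
  simp only [util_node, induced_dev (nodeAt_node_singleton i cs _), List.singleton_append,
    joinStrategy_cons, dev_node_nil_of_ne cs σ _ h]

theorem util_dev_joinStrategy_node_self {j : Fin N} {n : ℕ} (cs : Fin n → GameTree N)
    (σ : Profile) (a : Fin n) (s : Fin n → List ℕ → ℕ) :
    util (dev (node j n cs) σ j (joinStrategy a s)) (node j n cs) j =
      util (dev (cs a) (induced σ [a.val]) j (s a)) (cs a) j := by
  simp only [util_node, induced_dev (nodeAt_node_singleton j cs _), List.singleton_append,
    joinStrategy_cons, dev_node_nil_self, pureProfile, joinStrategy_nil, Fin.val_inj, ite_mul,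
    one_mul, zero_mul, Fintype.sum_ite_eq]

theorem exists_validPure_util_le_util_dev (j : Fin N) (t : GameTree N) {σ : Profile}
    (hw : t.ValidWeights) (hσ : ValidProfile t σ) :
    ∃ s, ValidPure t s ∧ util σ t j ≤ util (dev t σ j s) t j := by
  induction t generalizing σ with
  | leaf u =>
    refine ⟨fun _ => 0, ?_, by rw [util_leaf, util_leaf]⟩
    rintro (_ | _) i m cs h <;> cases h
  | chance n wt cs ih =>
    choose g hg hle using fun k =>
      ih k (hw.2.2.2 k) (hσ.induced (nodeAt_chance_singleton wt cs k))
    refine ⟨joinStrategy 0 g, validPure_chance_joinStrategy 0 hg, ?_⟩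
    rw [util_chance, util_dev_joinStrategy_chance]
    exact Finset.sum_le_sum fun k _ => mul_le_mul_of_nonneg_left (hle k) (hw.2.1 k).le
  | node i n cs ih =>
    choose g hg hle using fun k =>
      ih k (hw.2 k) (hσ.induced (nodeAt_node_singleton i cs k))
    obtain ⟨hpos, hsum⟩ := hσ.root
    by_cases hij : i = j
    · subst hij
      obtain ⟨kmax, -, hkmax⟩ := Finset.exists_max_image Finset.univ
        (fun k => util (induced σ [k.val]) (cs k) i) ⟨⟨0, hw.1⟩, Finset.mem_univ _⟩
      refine ⟨joinStrategy kmax g, validPure_node_joinStrategy kmax.isLt hg, ?_⟩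
      rw [util_node, util_dev_joinStrategy_node_self]
      calc ∑ k : Fin n, σ [] k * util (induced σ [k.val]) (cs k) i
          ≤ ∑ k : Fin n, σ [] k * util (induced σ [kmax.val]) (cs kmax) i :=
            Finset.sum_le_sum fun k _ =>
              mul_le_mul_of_nonneg_left (hkmax k (Finset.mem_univ k)) (hpos k)
        _ = util (induced σ [kmax.val]) (cs kmax) i := by rw [← Finset.sum_mul, hsum, one_mul]
        _ ≤ _ := hle kmax
    · refine ⟨joinStrategy 0 g, validPure_node_joinStrategy hw.1 hg, ?_⟩
      rw [util_node, util_dev_joinStrategy_node_of_ne hij]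
      exact Finset.sum_le_sum fun k _ => mul_le_mul_of_nonneg_left (hle k) (hpos k)

theorem exists_validPure_children_extend {n : ℕ} (cs : Fin n → GameTree N) (σ : Profile)
    (j : Fin N) (hw : ∀ k, (cs k).ValidWeights)
    (hσ : ∀ k, ValidProfile (cs k) (induced σ [k.val])) {k : Fin n} {s : List ℕ → ℕ}
    (hs : ValidPure (cs k) s) :
    ∃ g : Fin n → List ℕ → ℕ, g k = s ∧ (∀ k', ValidPure (cs k') (g k')) ∧ ∀ k' ≠ k,
      util (induced σ [k'.val]) (cs k') j ≤
        util (dev (cs k') (induced σ [k'.val]) j (g k')) (cs k') j := by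
  choose g hg hle using fun k => exists_validPure_util_le_util_dev j (cs k) (hw k) (hσ k)
  refine ⟨Function.update g k s, Function.update_self k s g, fun k' => ?_, fun k' hk' => ?_⟩
  · rcases eq_or_ne k' k with rfl | hk'
    · rwa [Function.update_self]
    · rw [Function.update_of_ne hk']
      exact hg k'
  · rw [Function.update_of_ne hk']
    exact hle k'

theorem IsNash.induced_chance {n : ℕ} {wt : Fin n → ℝ} {cs : Fin n → GameTree N}
    {σ : Profile} (hw : (chance n wt cs).ValidWeights) (hm : TotallyMixed (chance n wt cs) σ)
    (hn : IsNash (chance n wt cs) σ) (k : Fin n) : IsNash (cs k) (induced σ [k.val]) := by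
  intro j s hs
  by_contra! hgain
  obtain ⟨g, rfl, hg, hle⟩ := exists_validPure_children_extend cs σ j hw.2.2.2
    (fun k => (hm.induced (nodeAt_chance_singleton wt cs k)).validProfile) hs
  refine (hn j _ (validPure_chance_joinStrategy 0 hg)).not_gt ?_
  rw [util_chance, util_dev_joinStrategy_chance]
  refine Finset.sum_mul_lt_sum_mul_of_lt hw.2.1 (fun k' => ?_) hgain
  rcases eq_or_ne k' k with rfl | hk'
  exacts [hgain.le, hle k' hk']

theorem IsNash.induced_node {i : Fin N} {n : ℕ} {cs : Fin n → GameTree N}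
    {σ : Profile} (hw : (node i n cs).ValidWeights) (hm : TotallyMixed (node i n cs) σ)
    (hn : IsNash (node i n cs) σ) (k : Fin n) : IsNash (cs k) (induced σ [k.val]) := by
  intro j s hs
  by_contra! hgain
  have hσ k := (hm.induced (nodeAt_node_singleton i cs k)).validProfile
  obtain ⟨g, rfl, hg, hle⟩ := exists_validPure_children_extend cs σ j hw.2 hσ hs
  obtain ⟨hpos, hsum⟩ := hm.root
  by_cases hij : i = j
  · subst hij
    choose g' hg' hle' using fun k => exists_validPure_util_le_util_dev i (cs k) (hw.2 k) (hσ k)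
    have hchild_le k' : util (induced σ [k'.val]) (cs k') i ≤ util σ (node i n cs) i := by
      refine (hle' k').trans ?_
      rw [← util_dev_joinStrategy_node_self cs σ k' g']
      exact hn i _ (validPure_node_joinStrategy k'.isLt hg')
    have hchild_eq := Finset.eq_of_sum_mul_eq hpos hsum hchild_le (util_node σ i cs i).symm k
    refine (hn i _ (validPure_node_joinStrategy k.isLt hg)).not_gt ?_
    rwa [util_dev_joinStrategy_node_self, ← hchild_eq]
  · refine (hn j _ (validPure_node_joinStrategy k.isLt hg)).not_gt ?_
    rw [util_node, util_dev_joinStrategy_node_of_ne hij]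
    refine Finset.sum_mul_lt_sum_mul_of_lt hpos (fun k' => ?_) hgain
    rcases eq_or_ne k' k with rfl | hk'
    exacts [hgain.le, hle k' hk']

theorem IsNash.induced_singleton {t c : GameTree N} {σ : Profile} (hw : t.ValidWeights)
    (hm : TotallyMixed t σ) (hn : IsNash t σ) {k : ℕ} (hk : t.nodeAt [k] = some c) :
    IsNash c (induced σ [k]) := by
  cases t with
  | leaf u => cases hk
  | chance n wt cs =>
    simp only [nodeAt] at hk
    split at hk
    · cases hk
      exact hn.induced_chance hw hm _
    · cases hk
  | node i n cs =>
    simp only [nodeAt] at hk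
    split at hk
    · cases hk
      exact hn.induced_node hw hm _
    · cases hk

theorem IsNash.induced {t t' : GameTree N} {σ : Profile} (hw : t.ValidWeights)
    (hm : TotallyMixed t σ) (hn : IsNash t σ) {ν : List ℕ} (hν : t.nodeAt ν = some t') :
    IsNash t' (induced σ ν) := by
  induction ν generalizing t σ with
  | nil =>
    simp only [nodeAt, Option.some.injEq] at hν
    exact hν ▸ hn
  | cons k r ih =>
    rw [← List.singleton_append, nodeAt_append] at hν
    obtain ⟨c, hc, hν⟩ := Option.bind_eq_some_iff.1 hν
    exact ih (hw.nodeAt hc) (hm.induced hc) (hn.induced_singleton hw hm hc) hν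

end GameTree

open GameTree in
/-- every totally mixed Nash equilibrium of a finite extensive-form
game (with perfect information) is subgame perfect. -/
theorem totallyMixed_nash_subgamePerfect {N : ℕ} (t : GameTree N) (hw : t.ValidWeights)
    (σ : GameTree.Profile) (hm : TotallyMixed t σ) (hn : IsNash t σ) :
    IsSubgamePerfect t σ :=
  fun _ _ hν => hn.induced hw hm hν
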